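/- arXiv:2202.05504 — 5 statements merged into one kernel-verified Lean document; each statement's English description precedes it below -/
import Mathlib

section
/- Let d ≥ 1 and let ε = (ε₁,…,ε_d) ∈ {−1,+1}^d, with the convention ε₀ = 1. Then there exists a family of polynomials H_{k,ε}(e₁,e₂) ∈ ℤ[e₁,e₂], k = 1,…,d, each homogeneous of degree k with nonnegative integer coefficients, such that for every commutative ring K, every polynomial P ∈ K[X] of degree at most d, and all a, b, x ∈ K, writing e₁ = x − a and e₂ = b − x, one has the algebraic identity P(x) = P(a₀) + Σ_{k=1}^{d−1} ε_k · H_{k,ε}(e₁,e₂) · P^[k](a_k) + ε_d · H_{d,ε}(e₁,e₂) · p_d, where p_d is the coefficient of X^d in P, and where a_k = a if ε_k ε_{k+1} = 1 and a_k = b if ε_k ε_{k+1} = −1 (for 0 ≤ k ≤ d−1). Moreover, if ε₁ = 1 then e₁ divides every H_{k,ε} and the coefficient of e₁^k in H_{k,ε} is nonzero; if ε₁ = −1 then e₂ divides every H_{k,ε} and the coefficient of e₂^k in H_{k,ε} is nonzero. -/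
/-!
Define `B_0 = 1` and, for `n ≥ 1`, `B_n` by `∑_{j ≤ n} C(n,j) (a_j - x)^(n-j) B_j = 0`. Expanding
`a_k^(n-k) = (x + (a_k - x))^(n-k)` binomially and exchanging the two sums turns these relations
into `x^n = ∑_k C(n,k) a_k^(n-k) B_k`, which is the formula `P(x) = ∑_k B_k P^[k](a_k)` for
`P = X^n`; linearity gives it for all `P`, and `H_k = ε_k B_k`.

In the variables `e₁ = x - a`, `e₂ = b - x` each `a_j - x` is `-e₁` or `e₂`, so `B_n` is an integral
form of degree `n`, divisible by the variable that vanishes at `a_0`. Since `d/dx = ∂/∂e₁ - ∂/∂e₂`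
maps `B_n` to `n B_{n-1}` built on the shifted nodes `a_1, a_2, …`, the coefficients of `±B_n`
satisfy `(i+1) c_{i+1,j} = (j+1) c_{i,j+1} + n c'_{i,j}` (exponent `i` on the variable vanishing at
`a_0`) with `c_{0,j} = 0`. Induction on `n`, then on `i`, makes all of them nonnegative, and
positivity of one `c'` propagates along the diagonal to `c_{n,0}`.
-/

universe u

open Finset

theorem Nat.choose_mul_choose_sub_comm (n k i : ℕ) :
    n.choose k * (n - k).choose i = n.choose i * (n - i).choose k := by
  by_cases h : k + i ≤ n
  · have e1 := Nat.choose_mul (n := n) (Nat.le_add_right k i)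
    have e2 := Nat.choose_mul (n := n) (Nat.le_add_left i k)
    rw [Nat.add_sub_cancel_left] at e1
    rw [Nat.add_sub_cancel] at e2
    rw [← e1, ← e2, Nat.choose_symm_add]
  · have zero_of_lt {a b : ℕ} (hab : n < a + b) : n.choose a * (n - a).choose b = 0 := by
      rcases le_or_gt a n with ha | ha
      · rw [Nat.choose_eq_zero_of_lt (by omega : n - a < b), Nat.mul_zero]
      · rw [Nat.choose_eq_zero_of_lt ha, Nat.zero_mul]
    rw [zero_of_lt (by omega), zero_of_lt (by omega)]

section Gontcharov

variable {R : Type*} [CommRing R]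

/-- `n!` times the `n`-th Abel–Gontcharov polynomial of the nodes `a_k`, where `c k = a_k - x`. -/
def gontcharov (c : ℕ → R) : ℕ → R
  | 0 => 1
  | n + 1 => -∑ j : Fin (n + 1), ((n + 1).choose j : R) * (c j ^ (n + 1 - j) * gontcharov c j)

@[simp]
theorem gontcharov_zero (c : ℕ → R) : gontcharov c 0 = 1 := by
  rw [gontcharov]

theorem gontcharov_succ (c : ℕ → R) (n : ℕ) :
    gontcharov c (n + 1) =
      -∑ j ∈ range (n + 1), ((n + 1).choose j : R) * (c j ^ (n + 1 - j) * gontcharov c j) := by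
  rw [gontcharov, Fin.sum_univ_eq_sum_range
    (fun j => ((n + 1).choose j : R) * (c j ^ (n + 1 - j) * gontcharov c j))]

theorem sum_choose_mul_pow_mul_gontcharov (c : ℕ → R) (n : ℕ) :
    ∑ j ∈ range (n + 1), (n.choose j : R) * (c j ^ (n - j) * gontcharov c j) =
      if n = 0 then 1 else 0 := by
  cases n with
  | zero => simp
  | succ n => simp [sum_range_succ _ (n + 1), gontcharov_succ]

theorem map_gontcharov {S F : Type*} [CommRing S] [FunLike F R S] [RingHomClass F R S] (f : F)
    (c : ℕ → R) (n : ℕ) :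
    f (gontcharov c n) = gontcharov (fun j => f (c j)) n := by
  induction n using Nat.strong_induction_on with
  | _ n ih =>
    cases n with
    | zero => simp
    | succ n =>
      simp only [gontcharov_succ, map_neg, map_sum, map_mul, map_pow, map_natCast]
      congr 1
      exact sum_congr rfl fun j hj => by rw [ih j (mem_range.mp hj)]

theorem dvd_gontcharov_succ {c : ℕ → R} {p : R} (h : p ∣ c 0) (n : ℕ) :
    p ∣ gontcharov c (n + 1) := by
  induction n using Nat.strong_induction_on with
  | _ n ih =>
    rw [gontcharov_succ, dvd_neg]
    refine dvd_sum fun j hj => Dvd.dvd.mul_left ?_ _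
    rcases j with _ | j
    · exact (dvd_pow h (by omega)).mul_right _
    · exact (ih j (by simp at hj; omega)).mul_left _

theorem derivation_gontcharov_succ {S : Type*} [CommRing S] [Algebra S R] (D : Derivation S R R)
    {c : ℕ → R} (hc : ∀ j, D (c j) = -1) (n : ℕ) :
    D (gontcharov c (n + 1)) = (n + 1) * gontcharov (fun j => c (j + 1)) n := by
  -- Differentiating the relation defining `B_{n+1}`, the terms `D (c_j ^ _)` reassemble into the
  -- relation defining `B_n`, and the terms `D B_j` (by induction) into the shifted one.
  induction n using Nat.strong_induction_on with
  | _ n ih =>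
    have term (j : ℕ) : D ((n + 1).choose j * (c j ^ (n + 1 - j) * gontcharov c j)) =
        -((n + 1) * (n.choose j * (c j ^ (n - j) * gontcharov c j))) +
          (n + 1).choose j * (c j ^ (n + 1 - j) * D (gontcharov c j)) := by
      have hchoose : ((n + 1).choose j : R) * (n + 1 - j : ℕ) = (n + 1) * n.choose j := by
        rw [← Nat.cast_mul, ← Nat.choose_mul_succ_eq]; push_cast; ring
      simp only [Derivation.leibniz, Derivation.leibniz_pow, Derivation.map_natCast, hc,
        smul_eq_mul, nsmul_eq_mul]
      rw [show n + 1 - j - 1 = n - j by omega]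
      linear_combination -(c j ^ (n - j) * gontcharov c j) * hchoose
    have shifted (i : ℕ) (hi : i < n) :
        ((n + 1).choose (i + 1) : R) * (c (i + 1) ^ (n + 1 - (i + 1)) * D (gontcharov c (i + 1)))
          = (n + 1) * (n.choose i * (c (i + 1) ^ (n - i) * gontcharov (fun j => c (j + 1)) i)) := by
      have hchoose : ((n + 1).choose (i + 1) : R) * (i + 1) = (n + 1) * n.choose i := by
        exact_mod_cast congrArg (Nat.cast : ℕ → R) (Nat.add_one_mul_choose_eq n i).symm
      rw [ih i hi, Nat.add_sub_add_right]
      linear_combination (c (i + 1) ^ (n - i) * gontcharov (fun j => c (j + 1)) i) * hchoose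
    have recurrence := sum_choose_mul_pow_mul_gontcharov (fun j => c (j + 1)) n
    rw [sum_range_succ, Nat.choose_self, Nat.sub_self, Nat.cast_one, pow_zero, one_mul,
      one_mul] at recurrence
    rw [gontcharov_succ, map_neg, map_sum, sum_congr rfl fun j _ => term j, sum_add_distrib,
      sum_neg_distrib, ← mul_sum, sum_choose_mul_pow_mul_gontcharov, sum_range_succ',
      gontcharov_zero, Derivation.map_one_eq_zero,
      sum_congr rfl fun i hi => shifted i (mem_range.mp hi), ← mul_sum]
    linear_combination -(n + 1 : R) * recurrence

theorem isHomogeneous_gontcharov {σ : Type*} {c : ℕ → MvPolynomial σ R}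
    (hc : ∀ j, (c j).IsHomogeneous 1) (n : ℕ) : (gontcharov c n).IsHomogeneous n := by
  induction n using Nat.strong_induction_on with
  | _ n ih =>
    cases n with
    | zero => exact gontcharov_zero c ▸ MvPolynomial.isHomogeneous_one _ _
    | succ n =>
      rw [gontcharov_succ]
      refine (MvPolynomial.IsHomogeneous.sum _ _ _ fun j hj => ?_).neg
      have hj : j < n + 1 := mem_range.mp hj
      have h := ((hc j).pow (n + 1 - j)).mul (ih j hj)
      rw [one_mul, Nat.sub_add_cancel hj.le] at h
      simpa using h.C_mul ((n + 1).choose j : R)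

theorem sum_range_choose_mul_of_lt {m N : ℕ} (h : m < N) (f : ℕ → R) :
    ∑ k ∈ range N, (m.choose k : R) * f k = ∑ k ∈ range (m + 1), (m.choose k : R) * f k := by
  refine (sum_subset (range_subset_range.mpr h) fun k _ hk => ?_).symm
  rw [Nat.choose_eq_zero_of_lt (by simpa using hk), Nat.cast_zero, zero_mul]

theorem sum_choose_mul_add_pow_mul_gontcharov (c : ℕ → R) (x : R) {n N : ℕ} (hn : n < N) :
    ∑ k ∈ range N, (n.choose k : R) * ((x + c k) ^ (n - k) * gontcharov c k) = x ^ n := by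
  have binomial (k : ℕ) : (x + c k) ^ (n - k) =
      ∑ i ∈ range (n + 1), ((n - k).choose i : R) * (x ^ i * c k ^ (n - k - i)) := by
    rw [add_pow, sum_range_choose_mul_of_lt (by omega : n - k < n + 1)]
    exact sum_congr rfl fun i _ => by ring
  have reorder (k i : ℕ) : (n.choose k : R) * ((n - k).choose i * (x ^ i * c k ^ (n - k - i)) *
      gontcharov c k) =
      (n.choose i : R) * (x ^ i * ((n - i).choose k * (c k ^ (n - i - k) * gontcharov c k))) := by
    have trinomial : (n.choose k : R) * (n - k).choose i = n.choose i * (n - i).choose k := by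
      rw [← Nat.cast_mul, ← Nat.cast_mul, Nat.choose_mul_choose_sub_comm]
    rw [Nat.sub_right_comm n k i]
    linear_combination (x ^ i * c k ^ (n - i - k) * gontcharov c k) * trinomial
  have inner (i : ℕ) : ∑ k ∈ range (n + 1),
      ((n - i).choose k : R) * (c k ^ (n - i - k) * gontcharov c k) =
        if n - i = 0 then 1 else 0 := by
    rw [sum_range_choose_mul_of_lt (by omega : n - i < n + 1), sum_choose_mul_pow_mul_gontcharov]
  simp_rw [sum_range_choose_mul_of_lt hn, binomial, sum_mul, mul_sum, reorder]
  rw [sum_comm]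
  simp_rw [← mul_sum, inner]
  rw [sum_eq_single n (fun i hi hin => by simp [show n - i ≠ 0 by simp at hi; omega])
    (by simp)]
  simp

open Polynomial in
theorem eval_eq_sum_gontcharov_mul_eval_hasseDeriv (c : ℕ → R) (P : R[X]) {N : ℕ}
    (hP : P.natDegree < N) (x : R) :
    P.eval x = ∑ k ∈ range N, gontcharov c k * (hasseDeriv k P).eval (x + c k) := by
  conv_lhs => rw [P.as_sum_range' N hP]
  conv_rhs => rw [P.as_sum_range' N hP]
  simp only [map_sum, eval_finsetSum, hasseDeriv_monomial, eval_monomial, mul_sum]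
  rw [sum_comm]
  refine sum_congr rfl fun n hn => ?_
  rw [← sum_choose_mul_add_pow_mul_gontcharov c x (mem_range.mp hn), mul_sum]
  exact sum_congr rfl fun k _ => by ring

open Polynomial in
theorem eval_hasseDeriv_of_natDegree_le {P : R[X]} {d : ℕ} (hP : P.natDegree ≤ d) (y : R) :
    (hasseDeriv d P).eval y = P.coeff d := by
  rw [eq_C_of_natDegree_le_zero ((natDegree_hasseDeriv_le P d).trans (by omega)), eval_C,
    hasseDeriv_coeff, zero_add, Nat.choose_self, Nat.cast_one, one_mul]

open Polynomial in
theorem eval_eq_gontcharov_expansion (c : ℕ → R) {d : ℕ} (hd : 1 ≤ d) (P : R[X])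
    (hP : P.natDegree ≤ d) (x : R) :
    P.eval x = P.eval (x + c 0) +
      ∑ k ∈ Ico 1 d, gontcharov c k * (hasseDeriv k P).eval (x + c k) +
        gontcharov c d * P.coeff d := by
  rw [eval_eq_sum_gontcharov_mul_eval_hasseDeriv c P (Nat.lt_succ_of_le hP), sum_range_succ,
    range_eq_Ico, sum_eq_sum_Ico_succ_bot (by omega), eval_hasseDeriv_of_natDegree_le hP,
    gontcharov_zero, hasseDeriv_zero', one_mul]

end Gontcharov

section CoeffRecurrence

variable {f g : ℕ → ℕ → ℤ} {N : ℤ}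

theorem nonneg_of_coeff_recurrence (hN : 0 ≤ N) (hf : ∀ j, f 0 j = 0) (hg : ∀ i j, 0 ≤ g i j)
    (hrec : ∀ i j : ℕ, ((i : ℤ) + 1) * f (i + 1) j = ((j : ℤ) + 1) * f i (j + 1) + N * g i j)
    (i j : ℕ) : 0 ≤ f i j := by
  induction i generalizing j with
  | zero => exact (hf j).ge
  | succ i ih =>
    refine nonneg_of_mul_nonneg_right (a := (i : ℤ) + 1) ?_ (by positivity)
    rw [hrec]
    have := ih (j + 1)
    have := hg i j
    positivity

theorem pos_of_coeff_recurrence (hN : 0 < N) (hf : ∀ j, f 0 j = 0) (hg : ∀ i j, 0 ≤ g i j)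
    (hrec : ∀ i j : ℕ, ((i : ℤ) + 1) * f (i + 1) j = ((j : ℤ) + 1) * f i (j + 1) + N * g i j)
    {i j : ℕ} (h : 0 < g i j) : 0 < f (i + j + 1) 0 := by
  have hf_nonneg := nonneg_of_coeff_recurrence hN.le hf hg hrec
  have step {i j : ℕ} (h : 0 < f i (j + 1)) : 0 < f (i + 1) j := by
    refine pos_of_mul_pos_right (a := (i : ℤ) + 1) ?_ (by positivity)
    rw [hrec]
    have := hg i j
    positivity
  have chain {i j : ℕ} (h : 0 < f i j) : 0 < f (i + j) 0 := by
    induction j generalizing i with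
    | zero => exact h
    | succ j ih => rw [← add_assoc, add_right_comm]; exact ih (step h)
  rw [add_right_comm]
  refine chain (pos_of_mul_pos_right (a := (i : ℤ) + 1) ?_ (by positivity))
  rw [hrec]
  have := hf_nonneg i (j + 1)
  positivity

end CoeffRecurrence

open MvPolynomial

theorem MvPolynomial.coeff_eq_zero_of_X_dvd {σ R : Type*} [CommSemiring R] {p : MvPolynomial σ R}
    {i : σ} (h : X i ∣ p) {m : σ →₀ ℕ} (hm : m i = 0) : coeff m p = 0 := by
  classical
  obtain ⟨q, rfl⟩ := h
  rw [coeff_X_mul']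
  simp [hm]

section TwoNodes

/-- The offset `a_k - x` of the node `a` (`u = 0`) or `b` (`u = 1`) in the variables
`X 0 = x - a` and `X 1 = b - x`. -/
noncomputable def nodeOffset (u : Fin 2) : MvPolynomial (Fin 2) ℤ :=
  if u = 0 then -X 0 else X 1

/-- `d/dx` in the variables `X 0 = x - a` and `X 1 = b - x`. -/
noncomputable def xDerivation :
    Derivation ℤ (MvPolynomial (Fin 2) ℤ) (MvPolynomial (Fin 2) ℤ) :=
  pderiv 0 - pderiv 1

theorem X_dvd_nodeOffset (u : Fin 2) : X u ∣ nodeOffset u := by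
  fin_cases u <;> simp [nodeOffset]

theorem isHomogeneous_nodeOffset (u : Fin 2) : (nodeOffset u).IsHomogeneous 1 := by
  fin_cases u
  · exact (isHomogeneous_X ℤ 0).neg
  · exact isHomogeneous_X ℤ 1

theorem xDerivation_nodeOffset (u : Fin 2) : xDerivation (nodeOffset u) = -1 := by
  fin_cases u <;> simp [xDerivation, nodeOffset, pderiv_X]

theorem aeval_nodeOffset {K : Type*} [CommRing K] (a b x : K) (u : Fin 2) :
    aeval ![x - a, b - x] (nodeOffset u) = (if u = 0 then a else b) - x := by
  fin_cases u <;> simp [nodeOffset]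

noncomputable def biMonomial (u : Fin 2) (i j : ℕ) : Fin 2 →₀ ℕ :=
  Finsupp.single u i + Finsupp.single u.rev j

theorem biMonomial_apply_self (u : Fin 2) (i j : ℕ) : biMonomial u i j u = i := by
  fin_cases u <;> simp [biMonomial]

theorem eq_biMonomial (u : Fin 2) (m : Fin 2 →₀ ℕ) : m = biMonomial u (m u) (m u.rev) := by
  ext w
  fin_cases u <;> fin_cases w <;> simp [biMonomial]

theorem single_apply_add_single_apply_rev (u w : Fin 2) (n : ℕ) :
    Finsupp.single w n u + Finsupp.single w n u.rev = n := by
  fin_cases u <;> fin_cases w <;> simp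

theorem coeff_biMonomial_xDerivation (p : MvPolynomial (Fin 2) ℤ) (u : Fin 2) (i j : ℕ) :
    coeff (biMonomial u i j) (xDerivation p) =
      (-1) ^ (u : ℕ) * (((i : ℤ) + 1) * coeff (biMonomial u (i + 1) j) p -
        ((j : ℤ) + 1) * coeff (biMonomial u i (j + 1)) p) := by
  fin_cases u <;> simp [xDerivation, biMonomial, coeff_pderiv, Finsupp.single_add] <;> abel_nf <;>
    ring

variable (v : ℕ → Fin 2)

def nodeSign (n : ℕ) : ℤ := ∏ j ∈ range n, (-1) ^ (v j : ℕ)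

theorem nodeSign_succ (n : ℕ) :
    nodeSign v (n + 1) = (-1) ^ (v 0 : ℕ) * nodeSign (fun j => v (j + 1)) n := by
  rw [nodeSign, prod_range_succ', mul_comm, nodeSign]

theorem nodeSign_mul_self (n : ℕ) : nodeSign v n * nodeSign v n = 1 := by
  rw [nodeSign, ← prod_mul_distrib]
  exact prod_eq_one fun j _ => by rw [← mul_pow]; norm_num

noncomputable def signedGontcharov (n : ℕ) : MvPolynomial (Fin 2) ℤ :=
  nodeSign v n • gontcharov (fun j => nodeOffset (v j)) n

theorem isHomogeneous_signedGontcharov (n : ℕ) : (signedGontcharov v n).IsHomogeneous n := by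
  rw [signedGontcharov, smul_eq_C_mul]
  exact (isHomogeneous_gontcharov (fun j => isHomogeneous_nodeOffset _) n).C_mul _

theorem X_dvd_signedGontcharov_succ (n : ℕ) : X (v 0) ∣ signedGontcharov v (n + 1) := by
  rw [signedGontcharov, zsmul_eq_mul]
  exact (dvd_gontcharov_succ (X_dvd_nodeOffset _) n).mul_left _

theorem xDerivation_signedGontcharov_succ (n : ℕ) :
    xDerivation (signedGontcharov v (n + 1)) =
      ((-1) ^ (v 0 : ℕ) * (n + 1) : ℤ) • signedGontcharov (fun j => v (j + 1)) n := by
  rw [signedGontcharov, signedGontcharov, Derivation.map_smul,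
    derivation_gontcharov_succ _ (fun j => xDerivation_nodeOffset (v j)), nodeSign_succ]
  simp only [zsmul_eq_mul]
  push_cast
  ring

theorem coeff_signedGontcharov_succ_recurrence (n i j : ℕ) :
    ((i : ℤ) + 1) * coeff (biMonomial (v 0) (i + 1) j) (signedGontcharov v (n + 1)) =
      ((j : ℤ) + 1) * coeff (biMonomial (v 0) i (j + 1)) (signedGontcharov v (n + 1)) +
        (n + 1) * coeff (biMonomial (v 0) i j) (signedGontcharov (fun j => v (j + 1)) n) := by
  have h := congrArg (coeff (biMonomial (v 0) i j)) (xDerivation_signedGontcharov_succ v n)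
  rw [coeff_biMonomial_xDerivation, coeff_smul, smul_eq_mul, mul_assoc] at h
  linarith [mul_left_cancel₀ (pow_ne_zero _ (by norm_num)) h]

theorem coeff_signedGontcharov (n : ℕ) :
    (∀ m, 0 ≤ coeff m (signedGontcharov v n)) ∧
      0 < coeff (Finsupp.single (v 0) n) (signedGontcharov v n) := by
  induction n generalizing v with
  | zero =>
    refine ⟨fun m => ?_, by simp [signedGontcharov, nodeSign]⟩
    simp only [signedGontcharov, nodeSign, prod_range_zero, gontcharov_zero, one_smul, coeff_one]
    split_ifs <;> norm_num
  | succ n ih =>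
    obtain ⟨hg, hpos⟩ := ih fun j => v (j + 1)
    have hf (j : ℕ) : coeff (biMonomial (v 0) 0 j) (signedGontcharov v (n + 1)) = 0 :=
      coeff_eq_zero_of_X_dvd (X_dvd_signedGontcharov_succ v n) (biMonomial_apply_self _ 0 j)
    have hrec := coeff_signedGontcharov_succ_recurrence v n
    let f i j := coeff (biMonomial (v 0) i j) (signedGontcharov v (n + 1))
    let g i j := coeff (biMonomial (v 0) i j) (signedGontcharov (fun j => v (j + 1)) n)
    refine ⟨fun m => eq_biMonomial (v 0) m ▸ nonneg_of_coeff_recurrence (f := f) (g := g)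
      n.cast_add_one_pos.le hf (fun _ _ => hg _) hrec _ _, ?_⟩
    rw [zero_add, eq_biMonomial (v 0) (Finsupp.single _ _)] at hpos
    simpa only [f, single_apply_add_single_apply_rev, biMonomial, Finsupp.single_zero, add_zero]
      using pos_of_coeff_recurrence (f := f) (g := g) n.cast_add_one_pos hf (fun _ _ => hg _)
        hrec hpos

theorem intCast_nodeSign_mul_aeval_signedGontcharov {K : Type*} [CommRing K] (e : Fin 2 → K)
    (n : ℕ) : (nodeSign v n : K) * aeval e (signedGontcharov v n) =
      gontcharov (fun j => aeval e (nodeOffset (v j))) n := by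
  rw [signedGontcharov, map_zsmul, zsmul_eq_mul, ← mul_assoc, ← Int.cast_mul, nodeSign_mul_self,
    Int.cast_one, one_mul, map_gontcharov]

open Polynomial in
theorem eval_eq_signedGontcharov_expansion {K : Type*} [CommRing K] {d : ℕ} (hd : 1 ≤ d)
    (P : K[X]) (hP : P.natDegree ≤ d) (a b x : K) :
    P.eval x = P.eval (if v 0 = 0 then a else b) +
      ∑ k ∈ Ico 1 d, (nodeSign v k : K) * aeval ![x - a, b - x] (signedGontcharov v k) *
        (hasseDeriv k P).eval (if v k = 0 then a else b) +
      (nodeSign v d : K) * aeval ![x - a, b - x] (signedGontcharov v d) * P.coeff d := by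
  simp only [intCast_nodeSign_mul_aeval_signedGontcharov]
  simpa only [aeval_nodeOffset, add_sub_cancel] using eval_eq_gontcharov_expansion
    (fun j => aeval ![x - a, b - x] (nodeOffset (v j))) hd P hP x

end TwoNodes

def signNodes (ε : ℕ → ℤ) (j : ℕ) : Fin 2 := if ε j * ε (j + 1) = 1 then 0 else 1

theorem signNodes_eq_zero_iff (ε : ℕ → ℤ) (j : ℕ) :
    signNodes ε j = 0 ↔ ε j * ε (j + 1) = 1 := by
  unfold signNodes
  split_ifs <;> simp [*]

theorem nodeSign_signNodes {ε : ℕ → ℤ} {n : ℕ} (hε : ∀ j ≤ n, ε j = 1 ∨ ε j = -1) :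
    nodeSign (signNodes ε) n = ε 0 * ε n := by
  induction n with
  | zero => rcases hε 0 le_rfl with h | h <;> simp [nodeSign, h]
  | succ n ih =>
    rw [nodeSign, prod_range_succ, ← nodeSign, ih fun j hj => hε j (by omega)]
    rcases hε n (by omega) with h | h <;> rcases hε (n + 1) le_rfl with h' | h' <;>
      simp [signNodes, h, h']

/-- **Existence of Generalized Taylor Formulae.**
Given `d ≥ 1` and a sign sequence `ε : {1,…,d} → {−1,+1}` (with `ε 0 = 1`), there is a family
of polynomials `H k ∈ ℤ[e₁,e₂]` (`k = 1,…,d`), homogeneous of degree `k` with nonnegative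
coefficients, such that for every commutative ring `K`, every `P ∈ K[X]` of degree `≤ d`, and
all `a, b, x ∈ K`, with `e₁ = x − a`, `e₂ = b − x`, one has
`P(x) = P(a₀) + ∑_{k=1}^{d−1} ε k • H k (e₁,e₂) • P^[k](a_k) + ε d • H d (e₁,e₂) • p_d`,
where `P^[k]` is the `k`-th Hasse derivative, `p_d` is the coefficient of `X^d`, and
`a_k = a` if `ε k * ε (k+1) = 1`, `a_k = b` otherwise.  Moreover the stated divisibility and
nonvanishing properties of the `H k` hold according to the sign of `ε 1`. -/
theorem generalized_taylor_formula_exists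
    (d : ℕ) (hd : 1 ≤ d) (ε : ℕ → ℤ) (hε0 : ε 0 = 1)
    (hε : ∀ k, 1 ≤ k → k ≤ d → ε k = 1 ∨ ε k = -1) :
    ∃ H : ℕ → MvPolynomial (Fin 2) ℤ,
      (∀ k, 1 ≤ k → k ≤ d → MvPolynomial.IsHomogeneous (H k) k) ∧
      (∀ k, 1 ≤ k → k ≤ d → ∀ m : Fin 2 →₀ ℕ, 0 ≤ MvPolynomial.coeff m (H k)) ∧
      (∀ (K : Type u) [inst : CommRing K], ∀ P : Polynomial K, P.natDegree ≤ d →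
        ∀ a b x : K,
          P.eval x =
            P.eval (if ε 0 * ε 1 = 1 then a else b)
            + (∑ k ∈ Finset.Ico 1 d,
                (ε k : K) * (MvPolynomial.aeval ![x - a, b - x] (H k)) *
                  (Polynomial.hasseDeriv k P).eval (if ε k * ε (k+1) = 1 then a else b))
            + (ε d : K) * (MvPolynomial.aeval ![x - a, b - x] (H d)) * P.coeff d) ∧
      (ε 1 = 1 → ∀ k, 1 ≤ k → k ≤ d →
        MvPolynomial.X 0 ∣ H k ∧
          MvPolynomial.coeff (Finsupp.single (0 : Fin 2) k) (H k) ≠ 0) ∧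
      (ε 1 = -1 → ∀ k, 1 ≤ k → k ≤ d →
        MvPolynomial.X 1 ∣ H k ∧
          MvPolynomial.coeff (Finsupp.single (1 : Fin 2) k) (H k) ≠ 0) := by
  have hsign (k : ℕ) (hk : k ≤ d) : nodeSign (signNodes ε) k = ε k := by
    rw [nodeSign_signNodes fun j hj => ?_, hε0, one_mul]
    rcases j.eq_zero_or_pos with rfl | hj0
    · exact .inl hε0
    · exact hε j hj0 (hj.trans hk)
  have extreme (k : ℕ) (hk : 1 ≤ k) : X (signNodes ε 0) ∣ signedGontcharov (signNodes ε) k ∧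
      coeff (Finsupp.single (signNodes ε 0) k) (signedGontcharov (signNodes ε) k) ≠ 0 := by
    obtain ⟨n, rfl⟩ : ∃ n, k = n + 1 := ⟨k - 1, by omega⟩
    exact ⟨X_dvd_signedGontcharov_succ _ n, (coeff_signedGontcharov _ _).2.ne'⟩
  refine ⟨signedGontcharov (signNodes ε), fun k _ _ => isHomogeneous_signedGontcharov _ k,
    fun k _ _ => (coeff_signedGontcharov _ k).1, fun K _ P hP a b x => ?_,
    fun h1 k hk _ => by simpa [signNodes, hε0, h1] using extreme k hk,
    fun h1 k hk _ => by simpa [signNodes, hε0, h1] using extreme k hk⟩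
  rw [eval_eq_signedGontcharov_expansion _ hd P hP, hsign d le_rfl]
  simp only [signNodes_eq_zero_iff]
  congr 2
  exact sum_congr rfl fun k hk => by rw [hsign k (mem_Ico.mp hk).2.le]
end

section
/- Let K be a linearly ordered field, P ∈ K[X] a polynomial of degree d ≥ 1, and σ₀, σ₁, …, σ_d ∈ {−1,+1}. Let a, b, x ∈ K with a < x < b. Assume σ_k · P^[k](a) ≥ 0 and σ_k · P^[k](b) ≥ 0 for all k = 0,…,d−1, and σ_d · c_d > 0, where c_d is the leading coefficient of P. Then σ₀ · P(x) > 0. -/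
/-!
Write `P[y₀, …, yₙ]` for the Hermite divided differences of `P`. They are symmetric in the nodes,
`P[y, …, y] = P^[n](y)` (`n + 1` copies), `P[y₀, …, y_d] = lc P` when `d = deg P`, and
`P[s, u] = P[s, c] + (u - c) P[s, c, u]`. By downward induction on `n`, `σₙ P[y₀, …, yₙ] ≥ 0` for
all nodes in `[a, b]`, with strict inequality when one node is `x`: taking `c = a` if
`σₙ = σₙ₊₁` and `c = b` otherwise, the identity moves the nodes to `c` one at a time without
decreasing `σₙ P[…]`, until it reaches `σₙ P^[n](c) ≥ 0`. For `n = 0` this is `σ₀ P(x) > 0`.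
The argument is purely algebraic, as it must be: over a general ordered field there is no mean
value theorem to pass from the sign of `P^[n+1]` to the monotonicity of `P^[n]`.
-/

open Polynomial

namespace Polynomial

variable {R : Type*} [CommRing R]

theorem degree_monic_mul {p q : R[X]} (hp : p.Monic) : (p * q).degree = p.degree + q.degree := by
  rw [hp.degree_mul_comm, hp.degree_mul, add_comm]

theorem divByMonic_mul {p q r : R[X]} (hq : q.Monic) (hr : r.Monic) :
    p /ₘ (q * r) = p /ₘ q /ₘ r := by
  nontriviality R
  refine (div_modByMonic_unique (p /ₘ q /ₘ r) (q * (p /ₘ q %ₘ r) + p %ₘ q) (hq.mul hr)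
    ⟨?_, ?_⟩).1
  · linear_combination q * modByMonic_add_div (p /ₘ q) r + modByMonic_add_div p q
  · have hq_ne : q.degree ≠ ⊥ := degree_eq_bot.not.2 hq.ne_zero
    rw [degree_monic_mul hq]
    refine (degree_add_le _ _).trans_lt (max_lt ?_ ?_)
    · rw [degree_monic_mul hq]
      exact WithBot.add_lt_add_left hq_ne (degree_modByMonic_lt _ hr)
    · exact (degree_modByMonic_lt p hq).trans_le
        (le_add_of_nonneg_right (zero_le_degree_iff.2 hr.ne_zero))

theorem eval_divByMonic_X_sub_C_pow (p : R[X]) (y : R) (n : ℕ) :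
    (p /ₘ (X - C y) ^ n).eval y = (hasseDeriv n p).eval y := by
  nontriviality R
  rw [← taylor_coeff]
  conv_rhs => rw [← modByMonic_add_div p ((X - C y) ^ n)]
  rw [map_add, taylor_mul, taylor_pow, map_sub, taylor_X, taylor_C, add_sub_cancel_right,
    coeff_add, coeff_X_pow_mul', if_pos le_rfl, Nat.sub_self, taylor_coeff_zero,
    coeff_eq_zero_of_degree_lt, zero_add]
  have hdeg : ((X - C y) ^ n).degree = (n : WithBot ℕ) := by compute_degree!
  rw [degree_taylor, ← hdeg]
  exact degree_modByMonic_lt _ ((monic_X_sub_C y).pow n)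

theorem eval_eq_eval_add_mul_eval_divByMonic (p : R[X]) (u w : R) :
    p.eval u = p.eval w + (u - w) * (p /ₘ (X - C w)).eval u := by
  conv_lhs => rw [← modByMonic_add_div p (X - C w), modByMonic_X_sub_C_eq_C_eval]
  simp

theorem eval_divByMonic_X_sub_C_comm [IsDomain R] (p : R[X]) (u w : R) :
    (p /ₘ (X - C w)).eval u = (p /ₘ (X - C u)).eval w := by
  rcases eq_or_ne u w with rfl | huw
  · rfl
  refine mul_left_cancel₀ (sub_ne_zero.2 huw) ?_
  linear_combination -(eval_eq_eval_add_mul_eval_divByMonic p u w +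
    eval_eq_eval_add_mul_eval_divByMonic p w u)

/-- `(divDiff s P).eval u` is the (Hermite) divided difference `P[s, u]` of `P` at the nodes
`s + {u}`. -/
noncomputable def divDiff (s : Multiset R) (P : R[X]) : R[X] :=
  P /ₘ (s.map fun y => X - C y).prod

theorem monic_multiset_prod_X_sub_C (s : Multiset R) : (s.map fun y => X - C y).prod.Monic :=
  monic_multiset_prod_of_monic _ _ fun y _ => monic_X_sub_C y

@[simp]
theorem divDiff_zero (P : R[X]) : divDiff 0 P = P := by
  simp [divDiff]

theorem divDiff_cons (y : R) (s : Multiset R) (P : R[X]) :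
    divDiff (y ::ₘ s) P = divDiff s P /ₘ (X - C y) := by
  rw [divDiff, Multiset.map_cons, Multiset.prod_cons, mul_comm,
    divByMonic_mul (monic_multiset_prod_X_sub_C s) (monic_X_sub_C y), divDiff]

theorem eval_divDiff_replicate (n : ℕ) (y : R) (P : R[X]) :
    (divDiff (Multiset.replicate n y) P).eval y = (hasseDeriv n P).eval y := by
  rw [divDiff, Multiset.map_replicate, Multiset.prod_replicate, eval_divByMonic_X_sub_C_pow]

theorem eval_divDiff_of_card_eq_natDegree {s : Multiset R} {P : R[X]}
    (hs : Multiset.card s = P.natDegree) (u : R) : (divDiff s P).eval u = P.leadingCoeff := by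
  nontriviality R
  rcases eq_or_ne P 0 with rfl | hP
  · simp [divDiff]
  have hM := monic_multiset_prod_X_sub_C s
  have hMdeg : (s.map fun y => X - C y).prod.natDegree = P.natDegree := by
    rw [natDegree_multiset_prod_X_sub_C_eq_card, hs]
  have hconst : (divDiff s P).natDegree = 0 := by
    rw [divDiff, natDegree_divByMonic _ hM, hMdeg, Nat.sub_self]
  have hlc : (divDiff s P).leadingCoeff = P.leadingCoeff := by
    refine leadingCoeff_divByMonic_of_monic hM ?_
    rw [degree_eq_natDegree hM.ne_zero, degree_eq_natDegree hP, hMdeg]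
  rw [eq_C_of_natDegree_eq_zero hconst, eval_C, ← hlc, leadingCoeff, hconst]

theorem eval_divDiff_eq_add (s : Multiset R) (P : R[X]) (u c : R) :
    (divDiff s P).eval u = (divDiff s P).eval c + (u - c) * (divDiff (c ::ₘ s) P).eval u := by
  rw [divDiff_cons, eval_eq_eval_add_mul_eval_divByMonic _ u c]

theorem eval_divDiff_cons_comm [IsDomain R] (s : Multiset R) (P : R[X]) (u w : R) :
    (divDiff (w ::ₘ s) P).eval u = (divDiff (u ::ₘ s) P).eval w := by
  rw [divDiff_cons, divDiff_cons, eval_divByMonic_X_sub_C_comm]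

end Polynomial

section ThomSigns

open Set

variable {K : Type*} [CommRing K] [LinearOrder K]

def DivDiffNonnegOn (I : Set K) (τ : K) (P : K[X]) (n : ℕ) : Prop :=
  ∀ s : Multiset K, Multiset.card s = n → (∀ y ∈ s, y ∈ I) → ∀ u ∈ I,
    0 ≤ τ * (divDiff s P).eval u

def DivDiffPosAt (I : Set K) (x τ : K) (P : K[X]) (n : ℕ) : Prop :=
  ∀ s : Multiset K, Multiset.card s = n → (∀ y ∈ s, y ∈ I) → 0 < τ * (divDiff s P).eval x

variable {I : Set K} {P : K[X]} {s : Multiset K} {n : ℕ} {c u x τ τ' : K}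

theorem DivDiffNonnegOn.of_natDegree (h : 0 ≤ τ * P.leadingCoeff) :
    DivDiffNonnegOn I τ P P.natDegree := fun _s hs _ u _ => by
  rwa [eval_divDiff_of_card_eq_natDegree hs u]

theorem DivDiffPosAt.of_natDegree (h : 0 < τ * P.leadingCoeff) :
    DivDiffPosAt I x τ P P.natDegree := fun _s hs _ => by
  rwa [eval_divDiff_of_card_eq_natDegree hs x]

variable [IsStrictOrderedRing K]

theorem mul_eval_divDiff_le (hτ' : τ' ≠ 0) (hdir : 0 ≤ τ * τ' * (u - c))
    (hnext : 0 ≤ τ' * (divDiff (c ::ₘ s) P).eval u) :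
    τ * (divDiff s P).eval c ≤ τ * (divDiff s P).eval u := by
  have key : 0 ≤ τ * ((u - c) * (divDiff (c ::ₘ s) P).eval u) := by
    refine nonneg_of_mul_nonneg_right ?_ (mul_self_pos.2 hτ')
    convert mul_nonneg hdir hnext using 1
    ring
  rw [eval_divDiff_eq_add s P u c, mul_add]
  linarith

theorem mul_eval_divDiff_lt (hdir : 0 < τ * τ' * (u - c))
    (hnext : 0 < τ' * (divDiff (c ::ₘ s) P).eval u) :
    τ * (divDiff s P).eval c < τ * (divDiff s P).eval u := by
  have key : 0 < τ * ((u - c) * (divDiff (c ::ₘ s) P).eval u) := by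
    refine pos_of_mul_pos_right ?_ (mul_self_nonneg τ')
    convert mul_pos hdir hnext using 1
    ring
  rw [eval_divDiff_eq_add s P u c, mul_add]
  linarith

theorem DivDiffNonnegOn.of_succ (hc : c ∈ I) (hτ' : τ' ≠ 0)
    (hdir : ∀ u ∈ I, 0 ≤ τ * τ' * (u - c)) (hbase : 0 ≤ τ * (hasseDeriv n P).eval c)
    (hnext : DivDiffNonnegOn I τ' P (n + 1)) : DivDiffNonnegOn I τ P n := by
  have hanchor : ∀ t : Multiset K, (∀ y ∈ t, y ∈ I) → ∀ i, Multiset.card t + i = n →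
      0 ≤ τ * (divDiff (t + Multiset.replicate i c) P).eval c := by
    intro t
    induction t using Multiset.induction_on with
    | empty =>
      rintro - i rfl
      simpa [eval_divDiff_replicate] using hbase
    | cons y t ih =>
      intro ht i hi
      rw [Multiset.forall_mem_cons] at ht
      rw [Multiset.card_cons, add_right_comm] at hi
      have hrI : ∀ z ∈ t + Multiset.replicate (i + 1) c, z ∈ I := fun z hz =>
        (Multiset.mem_add.1 hz).elim (ht.2 z) fun hz => Multiset.eq_of_mem_replicate hz ▸ hc
      rw [Multiset.cons_add, eval_divDiff_cons_comm, ← Multiset.add_cons,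
        ← Multiset.replicate_succ]
      calc 0 ≤ τ * (divDiff (t + Multiset.replicate (i + 1) c) P).eval c := ih ht.2 (i + 1) hi
        _ ≤ _ := mul_eval_divDiff_le hτ' (hdir y ht.1) (hnext _ (by simp [← hi])
          (Multiset.forall_mem_cons.2 ⟨hc, hrI⟩) y ht.1)
  intro s hs hsI u hu
  calc 0 ≤ τ * (divDiff s P).eval c := by simpa using hanchor s hsI 0 (by simpa)
    _ ≤ τ * (divDiff s P).eval u :=
      mul_eval_divDiff_le hτ' (hdir u hu)
        (hnext _ (by simp [hs]) (Multiset.forall_mem_cons.2 ⟨hc, hsI⟩) u hu)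

theorem DivDiffPosAt.of_succ (hc : c ∈ I) (hdir : 0 < τ * τ' * (x - c))
    (hweak : DivDiffNonnegOn I τ P n) (hnext : DivDiffPosAt I x τ' P (n + 1)) :
    DivDiffPosAt I x τ P n := fun s hs hsI =>
  (hweak s hs hsI c hc).trans_lt
    (mul_eval_divDiff_lt hdir (hnext _ (by simp [hs]) (Multiset.forall_mem_cons.2 ⟨hc, hsI⟩)))

theorem divDiff_signs_of_thom {a b : K} {σ : ℕ → K} {d : ℕ} (hdeg : P.natDegree = d)
    (hσ : ∀ k ≤ d, σ k = 1 ∨ σ k = -1) (hax : a < x) (hxb : x < b)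
    (ha : ∀ k < d, 0 ≤ σ k * (hasseDeriv k P).eval a)
    (hb : ∀ k < d, 0 ≤ σ k * (hasseDeriv k P).eval b)
    (hlead : 0 < σ d * P.leadingCoeff) {n : ℕ} (hn : n ≤ d) :
    DivDiffNonnegOn (Icc a b) (σ n) P n ∧ DivDiffPosAt (Icc a b) x (σ n) P n := by
  induction hn using Nat.decreasingInduction with
  | self => subst hdeg; exact ⟨.of_natDegree hlead.le, .of_natDegree hlead⟩
  | of_succ n hn ih =>
    have hσ' : σ (n + 1) ≠ 0 := by rcases hσ (n + 1) hn with h | h <;> simp [h]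
    have step : ∀ c ∈ Icc a b, 0 ≤ σ n * (hasseDeriv n P).eval c →
        (∀ u ∈ Icc a b, 0 ≤ σ n * σ (n + 1) * (u - c)) → 0 < σ n * σ (n + 1) * (x - c) →
        DivDiffNonnegOn (Icc a b) (σ n) P n ∧ DivDiffPosAt (Icc a b) x (σ n) P n :=
      fun c hc hbase hdir hdirx =>
        have hweak := DivDiffNonnegOn.of_succ hc hσ' hdir hbase ih.1
        ⟨hweak, .of_succ hc hdirx hweak ih.2⟩
    have hsign : σ n * σ (n + 1) = 1 ∨ σ n * σ (n + 1) = -1 := by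
      rcases hσ n hn.le with h | h <;> rcases hσ (n + 1) hn with h' | h' <;> simp [h, h']
    rcases hsign with h | h <;> rw [h] at step
    · exact step a ⟨le_rfl, (hax.trans hxb).le⟩ (ha n hn) (fun u hu => by linarith [hu.1])
        (by linarith)
    · exact step b ⟨(hax.trans hxb).le, le_rfl⟩ (hb n hn) (fun u hu => by linarith [hu.2])
        (by linarith)

end ThomSigns

theorem sign_on_thom_interval_general {K : Type*} [Field K] [LinearOrder K] [IsStrictOrderedRing K]
    (P : Polynomial K) (d : ℕ) (hdeg : P.natDegree = d)
    (σ : ℕ → ℤ) (hσ : ∀ k, k ≤ d → σ k = 1 ∨ σ k = -1)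
    (a b x : K) (hax : a < x) (hxb : x < b)
    (ha : ∀ k, k < d → 0 ≤ (σ k : K) * (Polynomial.hasseDeriv k P).eval a)
    (hb : ∀ k, k < d → 0 ≤ (σ k : K) * (Polynomial.hasseDeriv k P).eval b)
    (hlead : 0 < (σ d : K) * P.leadingCoeff) :
    0 < (σ 0 : K) * P.eval x := by
  have hσK : ∀ k ≤ d, (σ k : K) = 1 ∨ (σ k : K) = -1 := fun k hk =>
    (hσ k hk).imp (fun h => by simp [h]) (fun h => by simp [h])
  have hpos := (divDiff_signs_of_thom hdeg hσK hax hxb ha hb hlead (Nat.zero_le d)).2 0 rfl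
    (by simp)
  rwa [divDiff_zero] at hpos

/-- **Thom's lemma consequence certified by generalized Taylor formulae.**
If `P` has degree `d ≥ 1`, the signs `σ_k P^[k]` are `≥ 0` at both `a` and `b` for
`k = 0,…,d−1`, and `σ_d · (leading coefficient) > 0`, then `σ₀ · P(x) > 0` for
every `x` strictly between `a` and `b`. Here `P^[k]` is the `k`-th Hasse derivative. -/
theorem sign_on_thom_interval {K : Type*} [Field K] [LinearOrder K] [IsStrictOrderedRing K]
    (P : Polynomial K) (d : ℕ) (hd : 1 ≤ d) (hdeg : P.natDegree = d)
    (σ : ℕ → ℤ) (hσ : ∀ k, k ≤ d → σ k = 1 ∨ σ k = -1)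
    (a b x : K) (hax : a < x) (hxb : x < b)
    (ha : ∀ k, k < d → 0 ≤ (σ k : K) * (Polynomial.hasseDeriv k P).eval a)
    (hb : ∀ k, k < d → 0 ≤ (σ k : K) * (Polynomial.hasseDeriv k P).eval b)
    (hlead : 0 < (σ d : K) * P.leadingCoeff) :
    0 < (σ 0 : K) * P.eval x :=
  sign_on_thom_interval_general P d hdeg σ hσ a b x hax hxb ha hb hlead
end

section
/- Let (K, v) be an ordered valued field and P ∈ K[X] a polynomial of degree d ≥ 1 whose leading coefficient P^[d] is > 0. Let a ∈ K be such that P^[k](a) ≥ 0 for all k = 0,…,d−1. Then for every x ∈ K with x > a, writing t = x − a, one has v(P(x)) = min( v(P(a)), v(P^[1](a)) + v(t), v(P^[2](a)) + 2·v(t), …, v(P^[d-1](a)) + (d−1)·v(t), v(P^[d]) + d·v(t) ). -/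
/-- An ordered valuation on a linearly ordered field `K`: an additively-written valuation
`v : K → Γ ∪ {∞}` compatible with the order. -/
def IsOrderedValuation {K Γ : Type*} [Field K] [LinearOrder K] [IsStrictOrderedRing K]
    [AddCommGroup Γ] [LinearOrder Γ] [IsOrderedAddMonoid Γ] (v : K → WithTop Γ) : Prop :=
  (∀ x, v x = ⊤ ↔ x = 0) ∧
  (∀ x y, v (x * y) = v x + v y) ∧
  (∀ x y, min (v x) (v y) ≤ v (x + y)) ∧
  (∀ x y : K, 0 ≤ x → x ≤ y → v y ≤ v x)

/-!
Taylor expansion at `a` writes `P(x)` as `∑ₖ P^[k](a) tᵏ` with `t = x - a > 0`. Under the sign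
hypotheses every summand is nonnegative, and for an ordered valuation a sum of nonnegative
elements has the valuation of its largest summand, i.e. the minimum of the valuations: the
ultrametric inequality gives `≥`, and the order compatibility `0 ≤ y ≤ ∑` gives `≤`.
-/

namespace Polynomial

theorem eval_add_eq_sum_hasseDeriv {R : Type*} [CommSemiring R] (p : R[X]) (a t : R) :
    p.eval (a + t) = ∑ k ∈ Finset.range (p.natDegree + 1), (hasseDeriv k p).eval a * t ^ k := by
  rw [add_comm, ← taylor_eval, eval_eq_sum_range, natDegree_taylor]
  simp only [taylor_coeff]

end Polynomial

namespace IsOrderedValuation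

variable {K Γ : Type*} [Field K] [LinearOrder K] [IsStrictOrderedRing K]
  [AddCommGroup Γ] [LinearOrder Γ] [IsOrderedAddMonoid Γ] {v : K → WithTop Γ}

theorem map_eq_top_iff (hv : IsOrderedValuation v) (x : K) : v x = ⊤ ↔ x = 0 := hv.1 x

theorem map_mul (hv : IsOrderedValuation v) (x y : K) : v (x * y) = v x + v y := hv.2.1 x y

theorem min_le_map_add (hv : IsOrderedValuation v) (x y : K) : min (v x) (v y) ≤ v (x + y) :=
  hv.2.2.1 x y

theorem map_le_map_of_nonneg_of_le (hv : IsOrderedValuation v) {x y : K} (hx : 0 ≤ x)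
    (hxy : x ≤ y) : v y ≤ v x :=
  hv.2.2.2 x y hx hxy

theorem map_one (hv : IsOrderedValuation v) : v 1 = 0 := by
  obtain ⟨γ, hγ⟩ := WithTop.ne_top_iff_exists.mp ((hv.map_eq_top_iff 1).not.mpr one_ne_zero)
  have h : v 1 = v 1 + v 1 := by rw [← hv.map_mul, one_mul]
  rw [← hγ] at h ⊢
  norm_cast at h ⊢
  exact left_eq_add.mp h

theorem map_pow (hv : IsOrderedValuation v) (t : K) (k : ℕ) : v (t ^ k) = k • v t := by
  induction k with
  | zero => simpa using hv.map_one
  | succ n ih => rw [pow_succ, hv.map_mul, ih, succ_nsmul]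

theorem map_sum_of_nonneg (hv : IsOrderedValuation v) {ι : Type*} {s : Finset ι}
    (hs : s.Nonempty) (f : ι → K) (hf : ∀ i ∈ s, 0 ≤ f i) :
    v (∑ i ∈ s, f i) = s.inf' hs (fun i => v (f i)) := by
  refine le_antisymm (Finset.le_inf'_iff _ _ |>.mpr fun i hi =>
    hv.map_le_map_of_nonneg_of_le (hf i hi) (Finset.single_le_sum hf hi)) ?_
  induction hs using Finset.Nonempty.cons_induction with
  | singleton i => simp
  | cons i s his hs ih =>
    rw [Finset.sum_cons, Finset.inf'_cons hs]
    exact (min_le_min le_rfl (ih fun j hj => hf j (Finset.mem_cons_of_mem hj))).trans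
      (hv.min_le_map_add _ _)

end IsOrderedValuation

theorem valuation_taylor_general {K Γ : Type*} [Field K] [LinearOrder K] [IsStrictOrderedRing K]
    [AddCommGroup Γ] [LinearOrder Γ] [IsOrderedAddMonoid Γ] (v : K → WithTop Γ) (hv : IsOrderedValuation v)
    (P : Polynomial K) (d : ℕ) (hdeg : P.natDegree = d)
    (hlead : 0 < P.leadingCoeff)
    (a : K) (ha : ∀ k, k < d → 0 ≤ (Polynomial.hasseDeriv k P).eval a)
    (x : K) (hx : a < x) :
    v (P.eval x) =
      (Finset.range (d + 1)).inf' Finset.nonempty_range_add_one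
        (fun k => v ((Polynomial.hasseDeriv k P).eval a) + k • v (x - a)) := by
  have htaylor := P.eval_add_eq_sum_hasseDeriv a (x - a)
  rw [add_sub_cancel, hdeg] at htaylor
  have hderiv_nonneg : ∀ k ≤ d, 0 ≤ (Polynomial.hasseDeriv k P).eval a := by
    intro k hk
    rcases hk.lt_or_eq with hk | rfl
    · exact ha k hk
    · rw [← hdeg, Polynomial.hasseDeriv_natDegree_eq_C, Polynomial.eval_C]
      exact hlead.le
  have hterm_nonneg : ∀ k ∈ Finset.range (d + 1),
      0 ≤ (Polynomial.hasseDeriv k P).eval a * (x - a) ^ k := fun k hk =>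
    mul_nonneg (hderiv_nonneg k (Finset.mem_range_succ_iff.mp hk))
      (pow_nonneg (sub_nonneg.mpr hx.le) k)
  rw [htaylor, hv.map_sum_of_nonneg Finset.nonempty_range_add_one _ hterm_nonneg]
  exact Finset.inf'_congr _ rfl fun k _ => by rw [hv.map_mul, hv.map_pow]

/-- **Valuation via the usual Taylor formula.**
If `P` has degree `d ≥ 1`, positive leading coefficient, and all Hasse derivatives
`P^[k](a) ≥ 0` for `k < d`, then for `x > a`, writing `t = x − a`,
`v(P(x)) = min_{0 ≤ k ≤ d} ( v(P^[k](a)) + k·v(t) )`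
(the `k = d` term being `v(P^[d]) + d·v(t)` with `P^[d]` the leading coefficient). -/
theorem valuation_taylor {K Γ : Type*} [Field K] [LinearOrder K] [IsStrictOrderedRing K]
    [AddCommGroup Γ] [LinearOrder Γ] [IsOrderedAddMonoid Γ] (v : K → WithTop Γ) (hv : IsOrderedValuation v)
    (P : Polynomial K) (d : ℕ) (hd : 1 ≤ d) (hdeg : P.natDegree = d)
    (hlead : 0 < P.leadingCoeff)
    (a : K) (ha : ∀ k, k < d → 0 ≤ (Polynomial.hasseDeriv k P).eval a)
    (x : K) (hx : a < x) :
    v (P.eval x) =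
      (Finset.range (d + 1)).inf' Finset.nonempty_range_add_one
        (fun k => v ((Polynomial.hasseDeriv k P).eval a) + k • v (x - a)) :=
  valuation_taylor_general v hv P d hdeg hlead a ha x hx
end

section
/- Let L be an algebraically closed field equipped with a valuation v : L → Γ ∪ {∞} written additively (Γ a linearly ordered abelian group). Let P = Σ_{k=0}^d p_k X^k ∈ L[X] with p_d ≠ 0. Let 0 ≤ i < j ≤ d with p_i ≠ 0 and p_j ≠ 0, and let γ ∈ Γ satisfy (j − i)·γ = v(p_i) − v(p_j). Assume that: v(p_k) + k·γ ≥ v(p_i) + i·γ for all k with i < k < j; v(p_k) + k·γ > v(p_i) + i·γ for all k < i; and v(p_k) + k·γ > v(p_j) + j·γ for all k > j (inequalities automatically satisfied when p_k = 0, i.e. v(p_k) = ∞). Then the multiset of roots of P in L, counted with multiplicities, contains exactly j − i roots x with v(x) = γ. -/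
/-!
Fix the slope `γ` and weigh the `k`-th coefficient of a polynomial by `v (p_k) + k γ`. The first
and the last index at which this weight is minimal are additive under multiplication: in the
coefficient of `p q` at the sum of the first (or last) indices, exactly one term of the
convolution attains the minimum, so it determines the valuation of the sum. For `X - r` these
indices are `(0, 0)`, `(0, 1)` or `(1, 1)` according as `v r < γ`, `v r = γ` or `v r > γ`.
Factoring `P = c ∏ (X - r)` over the algebraically closed field, the indices for `P` are
`#{v r > γ}` and `#{v r ≥ γ}`; the hypotheses say that they are `i` and `j`, so
`j - i = #{v r = γ}`.
-/

open Polynomial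

theorem Multiset.countP_le_eq_countP_eq_add_countP_lt {α β : Type*} [LinearOrder β]
    (f : α → β) (b : β) (s : Multiset α) :
    s.countP (b ≤ f ·) = s.countP (f · = b) + s.countP (b < f ·) := by
  induction s using Multiset.induction_on with
  | empty => simp
  | cons a s ih =>
    simp only [Multiset.countP_cons, ih]
    rcases lt_trichotomy (f a) b with h | h | h
    · simp [h.not_ge, h.ne, h.not_gt]
    · simp only [h, le_refl, lt_irrefl, if_true, if_false]
      omega
    · simp only [h.le, h.ne', h, if_true, if_false]
      omega

theorem WithTop.nsmul_coe_ne_top {α : Type*} [AddMonoid α] (n : ℕ) (a : α) :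
    n • (a : WithTop α) ≠ ⊤ :=
  WithTop.coe_nsmul a n ▸ WithTop.coe_ne_top

namespace AddValuation

open LinearOrderedAddCommGroupWithTop

variable {R Γ₀ ι : Type*} [Ring R] [LinearOrderedAddCommGroupWithTop Γ₀]
  (v : AddValuation R Γ₀) {s : Finset ι} {f : ι → R} {c e : Γ₀}

theorem le_map_sum_add (he : e ≠ ⊤) (hf : ∀ i ∈ s, c ≤ v (f i) + e) :
    c ≤ v (∑ i ∈ s, f i) + e := by
  have shift (x : Γ₀) : c ≤ x + e ↔ c + -e ≤ x := by
    rw [← add_le_add_iff_left_of_ne_top he (b := c + -e), neg_add_cancel_right_of_ne_top he]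
  exact (shift _).2 (v.map_le_sum fun i hi => (shift _).1 (hf i hi))

theorem lt_map_sum_add (he : e ≠ ⊤) (hc : c ≠ ⊤) (hf : ∀ i ∈ s, c < v (f i) + e) :
    c < v (∑ i ∈ s, f i) + e := by
  have shift (x : Γ₀) : c < x + e ↔ c + -e < x := by
    rw [← add_lt_add_iff_left_of_ne_top he (b := c + -e), neg_add_cancel_right_of_ne_top he]
  exact (shift _).2 (v.map_lt_sum (by simp [hc, he]) fun i hi => (shift _).1 (hf i hi))

theorem map_sum_eq_of_lt [DecidableEq ι] {j : ι} (hj : j ∈ s) (hfj : v (f j) ≠ ⊤)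
    (hf : ∀ i ∈ s, i ≠ j → v (f j) < v (f i)) : v (∑ i ∈ s, f i) = v (f j) := by
  rw [← Finset.add_sum_erase s f hj]
  exact v.map_add_eq_of_lt_left <| v.map_lt_sum hfj fun i hi =>
    hf i (Finset.mem_of_mem_erase hi) (Finset.ne_of_mem_erase hi)

end AddValuation

section NewtonPolygon

open Finset

variable {R Γ : Type*} [Ring R] [AddCommGroup Γ] [LinearOrder Γ] [IsOrderedAddMonoid Γ]
  (v : AddValuation R (WithTop Γ)) (γ : Γ)

def weightedVal (p : R[X]) (k : ℕ) : WithTop Γ := v (p.coeff k) + k • (γ : WithTop Γ)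

/-- `a` and `b` are the first and last indices at which `weightedVal v γ p` attains its finite
minimum, i.e. the edge of slope `-γ` of the Newton polygon of `p` runs from `a` to `b` (a vertex
when `a = b`). -/
structure IsMinSpan (p : R[X]) (a b : ℕ) : Prop where
  ne_top : weightedVal v γ p a ≠ ⊤
  le : ∀ k, weightedVal v γ p a ≤ weightedVal v γ p k
  lt_of_lt : ∀ k < a, weightedVal v γ p a < weightedVal v γ p k
  right_eq : weightedVal v γ p b = weightedVal v γ p a
  lt_of_gt : ∀ k, b < k → weightedVal v γ p a < weightedVal v γ p k

variable {v γ} {p q : R[X]} {k a b a' b' : ℕ}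

theorem weightedVal_mul_term {x : ℕ × ℕ} (hx : x ∈ antidiagonal k) :
    v (p.coeff x.1 * q.coeff x.2) + k • (γ : WithTop Γ) =
      weightedVal v γ p x.1 + weightedVal v γ q x.2 := by
  rw [weightedVal, weightedVal, v.map_mul, ← mem_antidiagonal.1 hx, add_nsmul,
    add_add_add_comm]

theorem le_weightedVal_mul {c : WithTop Γ}
    (h : ∀ x ∈ antidiagonal k, c ≤ weightedVal v γ p x.1 + weightedVal v γ q x.2) :
    c ≤ weightedVal v γ (p * q) k := by
  rw [weightedVal, coeff_mul]
  exact v.le_map_sum_add (WithTop.nsmul_coe_ne_top k γ) fun x hx => by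
    rw [weightedVal_mul_term hx]; exact h x hx

theorem lt_weightedVal_mul {c : WithTop Γ} (hc : c ≠ ⊤)
    (h : ∀ x ∈ antidiagonal k, c < weightedVal v γ p x.1 + weightedVal v γ q x.2) :
    c < weightedVal v γ (p * q) k := by
  rw [weightedVal, coeff_mul]
  exact v.lt_map_sum_add (WithTop.nsmul_coe_ne_top k γ) hc fun x hx => by
    rw [weightedVal_mul_term hx]; exact h x hx

theorem weightedVal_mul_eq_of_lt {y : ℕ × ℕ} (hy : y ∈ antidiagonal k) {m : WithTop Γ}
    (hym : weightedVal v γ p y.1 + weightedVal v γ q y.2 = m) (hm : m ≠ ⊤)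
    (h : ∀ x ∈ antidiagonal k, x ≠ y →
      m < weightedVal v γ p x.1 + weightedVal v γ q x.2) :
    weightedVal v γ (p * q) k = m := by
  have hk := WithTop.nsmul_coe_ne_top k γ
  rw [← hym, weightedVal, coeff_mul, ← weightedVal_mul_term hy, v.map_sum_eq_of_lt hy]
  · intro htop
    exact hm (by rw [← hym, ← weightedVal_mul_term hy, htop, top_add])
  · intro x hx hxy
    rw [← WithTop.add_lt_add_iff_right hk, weightedVal_mul_term hx, weightedVal_mul_term hy, hym]
    exact h x hx hxy

theorem IsMinSpan.mul (hp : IsMinSpan v γ p a b) (hq : IsMinSpan v γ q a' b') :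
    IsMinSpan v γ (p * q) (a + a') (b + b') := by
  set m := weightedVal v γ p a + weightedVal v γ q a'
  have hm : m ≠ ⊤ := WithTop.add_ne_top.2 ⟨hp.ne_top, hq.ne_top⟩
  have hlt (x : ℕ × ℕ) (hx : x.1 < a ∨ x.2 < a' ∨ b < x.1 ∨ b' < x.2) :
      m < weightedVal v γ p x.1 + weightedVal v γ q x.2 := by
    rcases hx with h | h | h | h
    · exact WithTop.add_lt_add_of_lt_of_le hq.ne_top (hp.lt_of_lt _ h) (hq.le _)
    · exact WithTop.add_lt_add_of_le_of_lt hp.ne_top (hp.le _) (hq.lt_of_lt _ h)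
    · exact WithTop.add_lt_add_of_lt_of_le hq.ne_top (hp.lt_of_gt _ h) (hq.le _)
    · exact WithTop.add_lt_add_of_le_of_lt hp.ne_top (hp.le _) (hq.lt_of_gt _ h)
  have hleft : weightedVal v γ (p * q) (a + a') = m := by
    refine weightedVal_mul_eq_of_lt (y := (a, a')) (mem_antidiagonal.2 rfl) rfl hm
      fun x hx hne => hlt x ?_
    have := mem_antidiagonal.1 hx
    rw [Ne, Prod.ext_iff] at hne
    omega
  have hright : weightedVal v γ (p * q) (b + b') = m := by
    refine weightedVal_mul_eq_of_lt (y := (b, b')) (mem_antidiagonal.2 rfl)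
      (by rw [hp.right_eq, hq.right_eq]) hm fun x hx hne => hlt x ?_
    have := mem_antidiagonal.1 hx
    rw [Ne, Prod.ext_iff] at hne
    omega
  refine ⟨hleft ▸ hm, fun k => hleft ▸ le_weightedVal_mul fun x _ =>
    add_le_add (hp.le x.1) (hq.le x.2), fun k hk => ?_, hright.trans hleft.symm, fun k hk => ?_⟩
  all_goals
    rw [hleft]
    refine lt_weightedVal_mul hm fun x hx => hlt x ?_
    have := mem_antidiagonal.1 hx
    omega

theorem IsMinSpan.left_le (h : IsMinSpan v γ p a b) (h' : IsMinSpan v γ p a' b') :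
    a ≤ a' :=
  not_lt.1 fun hlt => (h.lt_of_lt a' hlt).not_ge (h'.le a)

theorem IsMinSpan.right_le (h : IsMinSpan v γ p a b) (h' : IsMinSpan v γ p a' b') :
    b ≤ b' :=
  not_lt.1 fun hlt => (h'.lt_of_gt b hlt).not_ge (h.right_eq ▸ h.le a')

theorem IsMinSpan.unique (h : IsMinSpan v γ p a b) (h' : IsMinSpan v γ p a' b') :
    a = a' ∧ b = b' :=
  ⟨(h.left_le h').antisymm (h'.left_le h), (h.right_le h').antisymm (h'.right_le h)⟩

theorem IsMinSpan.mk' {i j : ℕ} (hi : weightedVal v γ p i ≠ ⊤)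
    (hj : weightedVal v γ p j = weightedVal v γ p i)
    (hlow : ∀ k < i, weightedVal v γ p i < weightedVal v γ p k)
    (hmid : ∀ k, i < k → k < j → weightedVal v γ p i ≤ weightedVal v γ p k)
    (hhigh : ∀ k, j < k → weightedVal v γ p j < weightedVal v γ p k) :
    IsMinSpan v γ p i j := by
  refine ⟨hi, fun k => ?_, hlow, hj, fun k hk => hj ▸ hhigh k hk⟩
  rcases lt_trichotomy k i with hki | rfl | hik
  · exact (hlow k hki).le
  · exact le_rfl
  rcases lt_trichotomy k j with hkj | rfl | hjk
  · exact hmid k hik hkj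
  · exact hj.ge
  · exact hj ▸ (hhigh k hjk).le

theorem isMinSpan_C {c : R} (hc : v c ≠ ⊤) : IsMinSpan v γ (C c) 0 0 := by
  have hw (k : ℕ) (hk : k ≠ 0) : weightedVal v γ (C c) k = ⊤ := by
    simp [weightedVal, coeff_C, hk]
  have h0 : weightedVal v γ (C c) 0 = v c := by simp [weightedVal]
  refine ⟨h0 ▸ hc, fun k => ?_, by simp, rfl, fun k hk => ?_⟩
  · rcases eq_or_ne k 0 with rfl | hk
    · exact le_rfl
    · exact hw k hk ▸ le_top
  · rw [hw k hk.ne', h0]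
    exact hc.lt_top

theorem weightedVal_X_sub_C (r : R) (k : ℕ) :
    weightedVal v γ (X - C r) k =
      if k = 0 then v r else if k = 1 then (γ : WithTop Γ) else ⊤ := by
  rcases k with _ | _ | k <;> simp [weightedVal, coeff_X, coeff_C]

theorem isMinSpan_X_sub_C (r : R) :
    IsMinSpan v γ (X - C r) (if (γ : WithTop Γ) < v r then 1 else 0)
      (if (γ : WithTop Γ) ≤ v r then 1 else 0) := by
  rcases lt_trichotomy (v r) γ with h | h | h
  · simp only [h.not_ge, h.not_gt, if_false]
    refine ⟨?_, fun k => ?_, fun k hk => ?_, rfl, fun k hk => ?_⟩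
    all_goals
      simp only [weightedVal_X_sub_C]
      split_ifs <;> simp_all [h.le, h.trans_le le_top, h.ne_top]
  · simp only [h, le_refl, lt_irrefl, if_true, if_false]
    refine ⟨?_, fun k => ?_, fun k hk => ?_, ?_, fun k hk => ?_⟩
    all_goals simp only [weightedVal_X_sub_C]; split_ifs <;> simp_all
  · simp only [h, h.le, if_true]
    refine ⟨?_, fun k => ?_, fun k hk => ?_, rfl, fun k hk => ?_⟩
    all_goals simp only [weightedVal_X_sub_C]; split_ifs <;> simp_all [h.le]

end NewtonPolygon

section Roots

variable {Γ : Type*} [AddCommGroup Γ] [LinearOrder Γ] [IsOrderedAddMonoid Γ] {γ : Γ}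

theorem isMinSpan_prod_X_sub_C {R : Type*} [CommRing R] {v : AddValuation R (WithTop Γ)}
    (s : Multiset R) :
    IsMinSpan v γ (s.map fun r => X - C r).prod (s.countP fun r => (γ : WithTop Γ) < v r)
      (s.countP fun r => (γ : WithTop Γ) ≤ v r) := by
  induction s using Multiset.induction_on with
  | empty => simpa using isMinSpan_C (v := v) (γ := γ) (c := 1) (by simp)
  | cons r s ih =>
    rw [Multiset.map_cons, Multiset.prod_cons, Multiset.countP_cons, Multiset.countP_cons,
      add_comm _ (ite _ _ _), add_comm _ (ite _ _ _)]
    exact (isMinSpan_X_sub_C r).mul ih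

theorem isMinSpan_roots {K : Type*} [Field K] {v : AddValuation K (WithTop Γ)} {p : K[X]}
    (hp : p ≠ 0) (hroots : Multiset.card p.roots = p.natDegree) :
    IsMinSpan v γ p (p.roots.countP fun r => (γ : WithTop Γ) < v r)
      (p.roots.countP fun r => (γ : WithTop Γ) ≤ v r) := by
  have h := (isMinSpan_C (γ := γ) ((v.ne_top_iff).2 (leadingCoeff_ne_zero.2 hp))).mul
    (isMinSpan_prod_X_sub_C p.roots)
  rwa [zero_add, zero_add, C_leadingCoeff_mul_prod_multiset_X_sub_C hroots] at h

end Roots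

theorem newton_polygon_root_count_general {L Γ : Type*} [Field L] [IsAlgClosed L]
    [AddCommGroup Γ] [LinearOrder Γ] [IsOrderedAddMonoid Γ] (v : L → WithTop Γ)
    (h0 : ∀ x, v x = ⊤ ↔ x = 0)
    (hmul : ∀ x y, v (x * y) = v x + v y)
    (hadd : ∀ x y, min (v x) (v y) ≤ v (x + y))
    (P : Polynomial L) (d : ℕ) (hdeg : P.natDegree = d) (hP : P ≠ 0)
    (i j : ℕ) (hij : i < j)
    (hpi : P.coeff i ≠ 0)
    (γ : Γ) (hγ : (j - i) • (↑γ : WithTop Γ) + v (P.coeff j) = v (P.coeff i))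
    (hmid : ∀ k, i < k → k < j →
      v (P.coeff i) + i • (↑γ : WithTop Γ) ≤ v (P.coeff k) + k • (↑γ : WithTop Γ))
    (hlow : ∀ k, k < i →
      v (P.coeff i) + i • (↑γ : WithTop Γ) < v (P.coeff k) + k • (↑γ : WithTop Γ))
    (hhigh : ∀ k, j < k → k ≤ d →
      v (P.coeff j) + j • (↑γ : WithTop Γ) < v (P.coeff k) + k • (↑γ : WithTop Γ)) :
    Multiset.card (P.roots.filter (fun x => v x = (↑γ : WithTop Γ))) = j - i := by
  have hv1 : v 1 = 0 := by
    have h := hmul 1 1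
    rw [one_mul] at h
    lift v 1 to Γ using fun h => one_ne_zero ((h0 1).1 h) with g
    norm_cast at h ⊢
    simpa using h
  let w := AddValuation.of v ((h0 0).2 rfl) hv1 hadd hmul
  have hi : weightedVal w γ P i ≠ ⊤ :=
    WithTop.add_ne_top.2 ⟨fun h => hpi ((h0 _).1 h), WithTop.nsmul_coe_ne_top i γ⟩
  have hj : weightedVal w γ P j = weightedVal w γ P i := by
    rw [weightedVal, weightedVal, AddValuation.of_apply, AddValuation.of_apply, ← hγ,
      add_right_comm, add_comm, ← add_nsmul, Nat.sub_add_cancel hij.le]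
  have hspan : IsMinSpan w γ P i j := by
    refine .mk' hi hj hlow hmid fun k hk => ?_
    rcases le_or_gt k d with hkd | hdk
    · exact hhigh k hk hkd
    · rw [weightedVal, weightedVal, coeff_eq_zero_of_natDegree_lt (n := k) (hdeg ▸ hdk),
        w.map_zero, top_add]
      exact (hj ▸ hi).lt_top
  obtain ⟨rfl, rfl⟩ := hspan.unique (isMinSpan_roots hP IsAlgClosed.card_roots_eq_natDegree)
  rw [Multiset.countP_le_eq_countP_eq_add_countP_lt w, Nat.add_sub_cancel,
    Multiset.countP_eq_card_filter]
  rfl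

/-- **Root-counting property of the Newton polygon.**
Let `L` be an algebraically closed field with an additively-written valuation
`v : L → Γ ∪ {∞}`. Let `P` have degree `d`, with `p_i ≠ 0`, `p_j ≠ 0` (`i < j ≤ d`), and
let `γ ∈ Γ` satisfy `(j−i)·γ = v(p_i) − v(p_j)`. If the segment from `(i, v(p_i))` to
`(j, v(p_j))` lies on the lower convex hull of the points `(k, v(p_k))` (the stated
inequalities), then `P` has exactly `j − i` roots `x` (with multiplicity) with `v(x) = γ`. -/
theorem newton_polygon_root_count {L Γ : Type*} [Field L] [IsAlgClosed L]
    [AddCommGroup Γ] [LinearOrder Γ] [IsOrderedAddMonoid Γ] (v : L → WithTop Γ)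
    (h0 : ∀ x, v x = ⊤ ↔ x = 0)
    (hmul : ∀ x y, v (x * y) = v x + v y)
    (hadd : ∀ x y, min (v x) (v y) ≤ v (x + y))
    (P : Polynomial L) (d : ℕ) (hdeg : P.natDegree = d) (hP : P ≠ 0)
    (i j : ℕ) (hij : i < j) (hjd : j ≤ d)
    (hpi : P.coeff i ≠ 0) (hpj : P.coeff j ≠ 0)
    (γ : Γ) (hγ : (j - i) • (↑γ : WithTop Γ) + v (P.coeff j) = v (P.coeff i))
    (hmid : ∀ k, i < k → k < j →
      v (P.coeff i) + i • (↑γ : WithTop Γ) ≤ v (P.coeff k) + k • (↑γ : WithTop Γ))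
    (hlow : ∀ k, k < i →
      v (P.coeff i) + i • (↑γ : WithTop Γ) < v (P.coeff k) + k • (↑γ : WithTop Γ))
    (hhigh : ∀ k, j < k → k ≤ d →
      v (P.coeff j) + j • (↑γ : WithTop Γ) < v (P.coeff k) + k • (↑γ : WithTop Γ)) :
    Multiset.card (P.roots.filter (fun x => v x = (↑γ : WithTop Γ))) = j - i :=
  newton_polygon_root_count_general v h0 hmul hadd P d hdeg hP i j hij hpi γ hγ hmid hlow hhigh
end

section
/- Let K be a field of characteristic 0 and let L be a finite set of polynomials in K[Y]. Then the smallest family L' of polynomials in K[Y] containing L and closed under the two operations P ↦ P' (formal derivative) and (P, Q) ↦ Rem(P, Q) (remainder of the Euclidean division of P by Q, for all P, Q ∈ L' with deg P ≥ deg Q ≥ 1) is a finite set. -/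
open Polynomial

private lemma key_closure {K : Type*} [Field K] :
    ∀ n : ℕ, ∀ A T : Finset (Polynomial K), (∀ P ∈ T, P.natDegree ≤ n) →
    ∃ S : Finset (Polynomial K), T ⊆ S ∧
      (∀ P ∈ S, derivative P ∈ S) ∧
      (∀ P ∈ S, ∀ Q ∈ S, 1 ≤ Q.natDegree → Q.natDegree ≤ P.natDegree → P % Q ∈ S) ∧
      (∀ P ∈ A, ∀ Q ∈ S, 1 ≤ Q.natDegree → P % Q ∈ S) ∧
      (∀ P ∈ S, P.natDegree ≤ n) := by
  classical
  intro n
  induction n with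
  | zero =>
    intro A T hT
    refine ⟨insert 0 T, Finset.subset_insert _ _, ?_, ?_, ?_, ?_⟩
    · intro P hP
      have hdeg : P.natDegree = 0 := by
        rcases Finset.mem_insert.mp hP with h | h
        · simp [h]
        · exact Nat.le_zero.mp (hT P h)
      obtain ⟨a, rfl⟩ := natDegree_eq_zero.mp hdeg
      simp
    · intro P _ Q hQ h1 _
      have : Q.natDegree = 0 := by
        rcases Finset.mem_insert.mp hQ with h | h
        · simp [h]
        · exact Nat.le_zero.mp (hT Q h)
      omega
    · intro P _ Q hQ h1
      have : Q.natDegree = 0 := by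
        rcases Finset.mem_insert.mp hQ with h | h
        · simp [h]
        · exact Nat.le_zero.mp (hT Q h)
      omega
    · intro P hP
      rcases Finset.mem_insert.mp hP with h | h
      · simp [h]
      · exact hT P h
  | succ n ih =>
    intro A T hT
    set A₁ : Finset (Polynomial K) := T.filter (fun P => P.natDegree = n + 1) with hA₁
    set A₂ : Finset (Polynomial K) := A ∪ A₁ with hA₂
    set R : Finset (Polynomial K) := (A₂ ×ˢ A₁).image (fun pq => pq.1 % pq.2) with hR
    set B : Finset (Polynomial K) :=
      (T.filter (fun P => P.natDegree ≤ n)) ∪ A₁.image derivative ∪ R with hB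
    have hA₁deg : ∀ Q ∈ A₁, Q.natDegree = n + 1 := fun Q hQ =>
      (Finset.mem_filter.mp hQ).2
    have hRdeg : ∀ P, ∀ Q ∈ A₁, (P % Q).natDegree ≤ n := by
      intro P Q hQ
      have h1 := natDegree_mod_lt P (q := Q) (by rw [hA₁deg Q hQ]; omega)
      have h2 := hA₁deg Q hQ
      omega
    have hBdeg : ∀ P ∈ B, P.natDegree ≤ n := by
      intro P hP
      rcases Finset.mem_union.mp hP with hP | hP
      · rcases Finset.mem_union.mp hP with hP | hP
        · exact (Finset.mem_filter.mp hP).2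
        · obtain ⟨Q, hQ, rfl⟩ := Finset.mem_image.mp hP
          have := natDegree_derivative_le Q
          have := hA₁deg Q hQ
          omega
      · obtain ⟨⟨P', Q⟩, hPQ, rfl⟩ := Finset.mem_image.mp hP
        exact hRdeg P' Q (Finset.mem_product.mp hPQ).2
    obtain ⟨S₀, hBS, hder, hrem, hA₂rem, hSdeg⟩ := ih A₂ B hBdeg
    refine ⟨S₀ ∪ A₁, ?_, ?_, ?_, ?_, ?_⟩
    · intro P hP
      by_cases h : P.natDegree = n + 1
      · exact Finset.mem_union_right _ (Finset.mem_filter.mpr ⟨hP, h⟩)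
      · have : P ∈ B := Finset.mem_union_left _ (Finset.mem_union_left _
          (Finset.mem_filter.mpr ⟨hP, by have := hT P hP; omega⟩))
        exact Finset.mem_union_left _ (hBS this)
    · intro P hP
      rcases Finset.mem_union.mp hP with hP | hP
      · exact Finset.mem_union_left _ (hder P hP)
      · have : derivative P ∈ B := Finset.mem_union_left _
          (Finset.mem_union_right _ (Finset.mem_image_of_mem _ hP))
        exact Finset.mem_union_left _ (hBS this)
    · intro P hP Q hQ h1 h2
      rcases Finset.mem_union.mp hQ with hQ | hQ
      · rcases Finset.mem_union.mp hP with hP | hP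
        · exact Finset.mem_union_left _ (hrem P hP Q hQ h1 h2)
        · exact Finset.mem_union_left _
            (hA₂rem P (Finset.mem_union_right _ hP) Q hQ h1)
      · rcases Finset.mem_union.mp hP with hP | hP
        · have := hSdeg P hP
          have := hA₁deg Q hQ
          omega
        · have : P % Q ∈ R := Finset.mem_image.mpr
            ⟨(P, Q), Finset.mem_product.mpr ⟨Finset.mem_union_right _ hP, hQ⟩, rfl⟩
          exact Finset.mem_union_left _ (hBS (Finset.mem_union_right _ this))
    · intro P hP Q hQ h1
      rcases Finset.mem_union.mp hQ with hQ | hQ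
      · exact Finset.mem_union_left _ (hA₂rem P (Finset.mem_union_left _ hP) Q hQ h1)
      · have : P % Q ∈ R := Finset.mem_image.mpr
          ⟨(P, Q), Finset.mem_product.mpr ⟨Finset.mem_union_left _ hP, hQ⟩, rfl⟩
        exact Finset.mem_union_left _ (hBS (Finset.mem_union_right _ this))
    · intro P hP
      rcases Finset.mem_union.mp hP with hP | hP
      · exact (hSdeg P hP).trans (Nat.le_succ n)
      · exact (hA₁deg P hP).le

/-- **Finiteness of the Cohen–Hörmander family.**
Let `K` be a field of characteristic `0` and `L` a finite set of polynomials in `K[Y]`.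
The smallest family `L'` containing `L` and closed under formal derivative and under
Euclidean remainder `(P, Q) ↦ P % Q` for `deg P ≥ deg Q ≥ 1` (realized as the intersection
of all such closed supersets of `L`) is finite. -/
theorem cohen_hormander_family_finite {K : Type*} [Field K] [CharZero K]
    (L : Finset (Polynomial K)) :
    Set.Finite (⋂₀ {S : Set (Polynomial K) | (↑L : Set (Polynomial K)) ⊆ S ∧
      (∀ P ∈ S, Polynomial.derivative P ∈ S) ∧
      (∀ P ∈ S, ∀ Q ∈ S, 1 ≤ Q.natDegree → Q.natDegree ≤ P.natDegree → P % Q ∈ S)}) := by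
  classical
  obtain ⟨S, hLS, hder, hrem, -, -⟩ :=
    key_closure (L.sup Polynomial.natDegree) ∅ L (fun P hP => Finset.le_sup hP)
  refine Set.Finite.subset S.finite_toSet (Set.sInter_subset_of_mem ?_)
  refine ⟨fun x hx => hLS hx, fun P hP => hder P hP, fun P hP Q hQ h1 h2 => hrem P hP Q hQ h1 h2⟩
end
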